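/- arXiv:math-ph/0501067 — 2 statements merged into one kernel-verified Lean document; each statement's English description precedes it below -/
import Mathlib

section
/- Let q ≥ 3 be an integer, β ≥ 0, and let x = (x₁,...,x_q) ∈ Δ_q be a global minimizer of Φ_{β,h}^{(q)}. (1) If h > 0, then x₁ > x₂ and x₂ = x₃ = ... = x_q. (2) If h < 0, then x is a permutation in the coordinates x₂,...,x_q of a vector satisfying x₁ < x₂ = x₃ = ... = x_{q−1} ≤ x_q. -/
open Real Set

noncomputable section

/-- The probability simplex `Δ_q`. -/
def pottsSimplex (q : ℕ) : Set (Fin q → ℝ) :=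
  {x | (∀ k, 0 ≤ x k) ∧ ∑ k, x k = 1}

/-- The mean-field free-energy function `Φ_{β,h}^{(q)}` of the `q`-state Potts model. -/
noncomputable def pottsPhi (q : ℕ) [NeZero q] (β h : ℝ) (x : Fin q → ℝ) : ℝ :=
  (∑ k, (-(β / 2) * x k ^ 2 + x k * Real.log (x k))) - h * x 0

/-- `x` is a global minimizer of `Φ_{β,h}^{(q)}` on `Δ_q`. -/
def IsPottsMinimizer (q : ℕ) [NeZero q] (β h : ℝ) (x : Fin q → ℝ) : Prop :=
  x ∈ pottsSimplex q ∧ ∀ y ∈ pottsSimplex q, pottsPhi q β h x ≤ pottsPhi q β h y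

/-- The last coordinate index of `Fin q` (corresponding to `x_q`). -/
def lastIdx (q : ℕ) [NeZero q] : Fin q :=
  ⟨q - 1, Nat.sub_lt (Nat.pos_of_ne_zero (NeZero.ne q)) Nat.one_pos⟩

/-- `k` is one of the "middle" indices `2,…,q-1` (i.e. `1,…,q-2` in 0-based indexing). -/
def IsMid (q : ℕ) [NeZero q] (k : Fin q) : Prop := k ≠ 0 ∧ k ≠ lastIdx q

/-!
Every coordinate of a minimizer is positive, because `u log u` has slope `-∞` at `0`; moving
mass between two coordinates then gives the first-order condition
`log xᵢ - β xᵢ - h·[i = 1] = const`. As `u ↦ log u - β u` increases up to `1/β` and decreases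
after it, two different coordinates with the same value of it lie on opposite sides of `1/β`.
On `[1/β, ∞)` the density `-(β/2) u² + u log u` is strictly concave, so pushing apart two
coordinates that both exceed `1/β` would lower `Φ`: at most one coordinate exceeds `1/β`.
Exchanging `x₁` and `x_k` shows that `x₁` is the largest coordinate when `h > 0` and the
smallest when `h < 0`. Hence all coordinates other than `x₁` and a largest one are equal.
-/

def pottsDensity (β u : ℝ) : ℝ := -(β / 2) * u ^ 2 + u * log u

@[simp]
lemma pottsDensity_zero (β : ℝ) : pottsDensity β 0 = 0 := by
  simp [pottsDensity]

lemma hasDerivAt_pottsDensity (β : ℝ) {u : ℝ} (hu : u ≠ 0) :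
    HasDerivAt (pottsDensity β) (log u + 1 - β * u) u := by
  have hsq : HasDerivAt (fun u : ℝ => -(β / 2) * u ^ 2) (-(β / 2) * (2 * u)) u := by
    simpa using (hasDerivAt_pow 2 u).const_mul (-(β / 2))
  exact (hsq.add (hasDerivAt_mul_log hu)).congr_deriv (by ring)

lemma strictAntiOn_log_sub_mul {β : ℝ} (hβ : 0 < β) :
    StrictAntiOn (fun u => log u - β * u) (Ici β⁻¹) := by
  have hpos : Ici β⁻¹ ⊆ Ioi 0 := fun u hu => (inv_pos.2 hβ).trans_le hu
  refine strictAntiOn_of_deriv_neg (convex_Ici _) ?_ fun u hu => ?_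
  · exact ((continuousOn_log.mono fun u hu => (hpos hu).ne').sub
      (continuousOn_const.mul continuousOn_id))
  · rw [interior_Ici] at hu
    have hu0 : 0 < u := (inv_pos.2 hβ).trans hu
    have hd : HasDerivAt (fun u => log u - β * u) (u⁻¹ - β) u :=
      ((hasDerivAt_log hu0.ne').sub ((hasDerivAt_id' u).const_mul β)).congr_deriv (by ring)
    rw [hd.deriv, sub_neg]
    exact inv_lt_of_inv_lt₀ hβ hu

lemma strictConcaveOn_pottsDensity {β : ℝ} (hβ : 0 < β) :
    StrictConcaveOn ℝ (Ici β⁻¹) (pottsDensity β) := by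
  have hcont : Continuous (pottsDensity β) :=
    (continuous_const.mul (continuous_pow 2)).add continuous_mul_log
  refine StrictAntiOn.strictConcaveOn_of_deriv (convex_Ici _) hcont.continuousOn ?_
  rw [interior_Ici]
  intro u hu v hv huv
  have hpos : ∀ {w}, w ∈ Ioi β⁻¹ → w ≠ 0 := fun hw => ((inv_pos.2 hβ).trans hw).ne'
  rw [(hasDerivAt_pottsDensity β (hpos hu)).deriv, (hasDerivAt_pottsDensity β (hpos hv)).deriv]
  linarith [strictAntiOn_log_sub_mul hβ (Ioi_subset_Ici_self hu) (Ioi_subset_Ici_self hv) huv]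

lemma pottsDensity_add_add_pottsDensity_sub_lt {β u ε : ℝ} (hβ : 0 < β) (hε : 0 < ε)
    (hu : β⁻¹ ≤ u - ε) :
    pottsDensity β (u + ε) + pottsDensity β (u - ε) < 2 * pottsDensity β u := by
  have hmid := (strictConcaveOn_pottsDensity hβ).2 (show β⁻¹ ≤ u + ε by linarith) hu
    (by linarith : u + ε ≠ u - ε) (one_half_pos (α := ℝ)) one_half_pos (add_halves 1)
  simp only [smul_eq_mul] at hmid
  have hu' : 1 / 2 * (u + ε) + 1 / 2 * (u - ε) = u := by ring
  rw [hu'] at hmid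
  linarith

lemma exists_pottsDensity_add_pottsDensity_sub_lt (β : ℝ) {s : ℝ} (hs : 0 < s) (a : ℝ) :
    ∃ t, 0 < t ∧ t ≤ s ∧ pottsDensity β t + pottsDensity β (s - t) + a * t < pottsDensity β s := by
  set K := |β| * s - log s + a
  set t := min (s / 2) (exp (-K - 1))
  have ht : 0 < t := lt_min (half_pos hs) (exp_pos _)
  have hts : t ≤ s / 2 := min_le_left _ _
  have hlog : log t ≤ -K - 1 := (log_le_log ht (min_le_right _ _)).trans (log_exp _).le
  have hent : (s - t) * log (s - t) ≤ (s - t) * log s :=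
    mul_le_mul_of_nonneg_left (log_le_log (by linarith) (by linarith)) (by linarith)
  have hquad : β * (s - t) * t ≤ |β| * s * t := by
    have : β * (s - t) ≤ |β| * s := by nlinarith [le_abs_self β, abs_nonneg β]
    exact mul_le_mul_of_nonneg_right this ht.le
  refine ⟨t, ht, by linarith, ?_⟩
  calc pottsDensity β t + pottsDensity β (s - t) + a * t
      = β * (s - t) * t + t * log t + (s - t) * log (s - t) - s * log s + a * t
        + pottsDensity β s := by unfold pottsDensity; ring
    _ ≤ t * (log t + K) + pottsDensity β s := by linarith
    _ < pottsDensity β s := by linarith [mul_neg_of_pos_of_neg ht (by linarith : log t + K < 0)]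

lemma inv_lt_of_log_sub_mul_eq {β a b : ℝ} (ha : 0 < a) (hab : a < b)
    (h : log a - β * a = log b - β * b) : 0 < β ∧ β⁻¹ < b := by
  have hb : 0 < b := ha.trans hab
  have hlog : log (a / b) < a / b - 1 :=
    log_lt_sub_one_of_pos (div_pos ha hb) (by rw [Ne, div_eq_one_iff_eq hb.ne']; exact hab.ne)
  rw [log_div ha.ne' hb.ne', div_sub_one hb.ne', lt_div_iff₀ hb] at hlog
  have hβb : 1 < β * b := by nlinarith
  have hβ : 0 < β := pos_of_mul_pos_left (one_pos.trans hβb) hb.le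
  exact ⟨hβ, by rwa [inv_lt_iff_one_lt_mul₀' hβ]⟩

lemma Fintype.sum_update_update_sub {ι α : Type*} [Fintype ι] [DecidableEq ι]
    (G : ι → α → ℝ) (x : ι → α) {i j : ι} (hij : i ≠ j) (a b : α) :
    ∑ k, G k (Function.update (Function.update x i a) j b k) - ∑ k, G k (x k)
      = (G i a - G i (x i)) + (G j b - G j (x j)) := by
  rw [← Finset.sum_sub_distrib, Fintype.sum_eq_add i j hij]
  · simp [Function.update_of_ne hij]
  · rintro k ⟨hki, hkj⟩
    simp [Function.update_of_ne hki, Function.update_of_ne hkj]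

def pottsSiteEnergy {q : ℕ} [NeZero q] (β h : ℝ) (k : Fin q) (u : ℝ) : ℝ :=
  pottsDensity β u - (if k = 0 then h else 0) * u

lemma pottsPhi_eq_sum_pottsSiteEnergy (q : ℕ) [NeZero q] (β h : ℝ) (x : Fin q → ℝ) :
    pottsPhi q β h x = ∑ k, pottsSiteEnergy β h k (x k) := by
  simp [pottsPhi, pottsSiteEnergy, pottsDensity, Finset.sum_sub_distrib, ite_mul]

lemma hasDerivAt_pottsSiteEnergy {q : ℕ} [NeZero q] (β h : ℝ) (k : Fin q) {u : ℝ} (hu : u ≠ 0) :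
    HasDerivAt (pottsSiteEnergy β h k) (log u + 1 - β * u - (if k = 0 then h else 0)) u :=
  ((hasDerivAt_pottsDensity β hu).sub ((hasDerivAt_id' u).const_mul _)).congr_deriv (by ring)

namespace IsPottsMinimizer

variable {q : ℕ} [NeZero q] {β h : ℝ} {x : Fin q → ℝ}

lemma pottsSiteEnergy_le_transfer (hx : IsPottsMinimizer q β h x) {i j : Fin q} (hij : i ≠ j)
    {δ : ℝ} (hi : 0 ≤ x i + δ) (hj : 0 ≤ x j - δ) :
    pottsSiteEnergy β h i (x i) + pottsSiteEnergy β h j (x j)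
      ≤ pottsSiteEnergy β h i (x i + δ) + pottsSiteEnergy β h j (x j - δ) := by
  set y := Function.update (Function.update x i (x i + δ)) j (x j - δ)
  have hsum := Fintype.sum_update_update_sub (fun _ u => u) x hij (x i + δ) (x j - δ)
  have hy : y ∈ pottsSimplex q := by
    refine ⟨fun k => ?_, by linarith [hx.1.2]⟩
    simp only [y, Function.update_apply]
    split_ifs
    exacts [hj, hi, hx.1.1 k]
  have hle := hx.2 y hy
  rw [pottsPhi_eq_sum_pottsSiteEnergy, pottsPhi_eq_sum_pottsSiteEnergy] at hle
  linarith [Fintype.sum_update_update_sub (pottsSiteEnergy β h) x hij (x i + δ) (x j - δ)]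

lemma pos (hx : IsPottsMinimizer q β h x) (i : Fin q) : 0 < x i := by
  by_contra! hi
  have hxi : x i = 0 := le_antisymm hi (hx.1.1 i)
  obtain ⟨j, -, hj⟩ : ∃ j ∈ Finset.univ, (0 : ℝ) < x j :=
    Finset.exists_lt_of_sum_lt (by simp [hx.1.2])
  have hij : i ≠ j := by rintro rfl; linarith
  obtain ⟨t, ht, hts, hlt⟩ := exists_pottsDensity_add_pottsDensity_sub_lt β hj
    ((if j = 0 then h else 0) - (if i = 0 then h else 0))
  have hle := hx.pottsSiteEnergy_le_transfer hij (δ := t) (by linarith) (by linarith)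
  simp only [pottsSiteEnergy, hxi, zero_add, pottsDensity_zero, mul_zero] at hle
  linarith

lemma log_sub_mul_eq (hx : IsPottsMinimizer q β h x) {i j : Fin q} (hij : i ≠ j) :
    log (x i) - β * x i - (if i = 0 then h else 0)
      = log (x j) - β * x j - (if j = 0 then h else 0) := by
  have hxi := hx.pos i
  have hxj := hx.pos j
  have hmin : IsLocalMin
      (fun δ => pottsSiteEnergy β h i (x i + δ) + pottsSiteEnergy β h j (x j - δ)) 0 := by
    filter_upwards [Ioo_mem_nhds (neg_neg_of_pos hxi) hxj] with δ hδ
    simpa using hx.pottsSiteEnergy_le_transfer hij (by linarith [hδ.1]) (by linarith [hδ.2])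
  have hderiv_i := HasDerivAt.comp_const_add (x i) 0
    (by simpa using hasDerivAt_pottsSiteEnergy β h i hxi.ne')
  have hderiv_j := HasDerivAt.comp_const_sub (x j) 0
    (by simpa using hasDerivAt_pottsSiteEnergy β h j hxj.ne')
  linarith [hmin.hasDerivAt_eq_zero (hderiv_i.add hderiv_j)]

lemma eq_of_inv_lt (hx : IsPottsMinimizer q β h x) (hβ : 0 < β) {i j : Fin q}
    (hi : β⁻¹ < x i) (hj : β⁻¹ < x j) : i = j := by
  by_contra hij
  set ε := min (x i - β⁻¹) (x j - β⁻¹)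
  have hε : 0 < ε := lt_min (sub_pos.2 hi) (sub_pos.2 hj)
  have hεi : ε ≤ x i - β⁻¹ := min_le_left _ _
  have hεj : ε ≤ x j - β⁻¹ := min_le_right _ _
  have hβ' : 0 < β⁻¹ := inv_pos.2 hβ
  have h₁ := hx.pottsSiteEnergy_le_transfer hij (δ := ε) (by linarith) (by linarith)
  have h₂ := hx.pottsSiteEnergy_le_transfer hij (δ := -ε) (by linarith) (by linarith)
  have hci := pottsDensity_add_add_pottsDensity_sub_lt hβ hε (by linarith : β⁻¹ ≤ x i - ε)
  have hcj := pottsDensity_add_add_pottsDensity_sub_lt hβ hε (by linarith : β⁻¹ ≤ x j - ε)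
  simp only [pottsSiteEnergy, sub_neg_eq_add, ← sub_eq_add_neg] at h₁ h₂
  linarith

lemma mul_apply_le_mul_apply_zero (hx : IsPottsMinimizer q β h x) (k : Fin q) :
    h * x k ≤ h * x 0 := by
  rcases eq_or_ne k 0 with rfl | hk
  · exact le_rfl
  have hle := hx.pottsSiteEnergy_le_transfer hk.symm (δ := x k - x 0) (by simpa using hx.1.1 k)
    (by simpa using hx.1.1 0)
  simp only [pottsSiteEnergy, add_sub_cancel, sub_sub_cancel, if_pos, if_neg hk] at hle
  linarith

lemma apply_ne_apply_zero (hx : IsPottsMinimizer q β h x) (hh : h ≠ 0) {k : Fin q} (hk : k ≠ 0) :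
    x k ≠ x 0 := by
  intro hxk
  have := hx.log_sub_mul_eq hk
  simp only [hxk, if_neg hk, if_pos] at this
  exact hh (by linarith)

lemma apply_eq_apply_of_ne_of_forall_le (hx : IsPottsMinimizer q β h x) {m : Fin q}
    (hm : ∀ k, x k ≤ x m) {j k : Fin q} (hj0 : j ≠ 0) (hjm : j ≠ m) (hk0 : k ≠ 0) (hkm : k ≠ m) :
    x j = x k := by
  have hnlt : ∀ {j k : Fin q}, j ≠ 0 → k ≠ 0 → k ≠ m → ¬ x j < x k := by
    intro j k hj0 hk0 hkm hlt
    have hjk : j ≠ k := by rintro rfl; exact hlt.false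
    have heq := hx.log_sub_mul_eq hjk
    simp only [if_neg hj0, if_neg hk0, sub_zero] at heq
    obtain ⟨hβ, hk⟩ := inv_lt_of_log_sub_mul_eq (hx.pos j) hlt heq
    exact hkm (hx.eq_of_inv_lt hβ hk (hk.trans_le (hm k)))
  exact le_antisymm (not_lt.1 (hnlt hk0 hj0 hjm)) (not_lt.1 (hnlt hj0 hk0 hkm))

end IsPottsMinimizer

lemma exists_perm_fixing_zero_of_forall_le {q : ℕ} [NeZero q] (x : Fin q → ℝ) {m : Fin q}
    (hm0 : m ≠ 0) (hm : ∀ k, x k ≤ x m) (hlt : ∀ k, k ≠ 0 → x 0 < x k)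
    (heq : ∀ j k, j ≠ 0 → j ≠ m → k ≠ 0 → k ≠ m → x j = x k) :
    ∃ (y : Fin q → ℝ) (σ : Equiv.Perm (Fin q)),
      σ 0 = 0 ∧ x = y ∘ σ ∧
      (∀ j k : Fin q, IsMid q j → IsMid q k → y j = y k) ∧
      (∀ j : Fin q, IsMid q j → y 0 < y j) ∧
      (∀ j : Fin q, IsMid q j → y j ≤ y (lastIdx q)) := by
  have hl0 : lastIdx q ≠ 0 := by
    intro hl
    have := m.isLt
    simp only [Fin.ext_iff, lastIdx, Fin.val_zero] at hl hm0
    omega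
  set σ := Equiv.swap m (lastIdx q)
  have hσ0 : σ 0 = 0 := Equiv.swap_apply_of_ne_of_ne hm0.symm hl0.symm
  have hσ : ∀ j, IsMid q j → σ j ≠ 0 ∧ σ j ≠ m := by
    rintro j ⟨hj0, hjl⟩
    rcases eq_or_ne j m with rfl | hjm
    · rw [Equiv.swap_apply_left]
      exact ⟨hl0, hjl.symm⟩
    · rw [Equiv.swap_apply_of_ne_of_ne hjm hjl]
      exact ⟨hj0, hjm⟩
  refine ⟨x ∘ σ, σ, hσ0, by ext; simp [σ], fun j k hj hk => ?_, fun j hj => ?_, fun j hj => ?_⟩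
  · exact heq _ _ (hσ j hj).1 (hσ j hj).2 (hσ k hk).1 (hσ k hk).2
  · simpa [hσ0] using hlt _ (hσ j hj).1
  · simpa [σ, Equiv.swap_apply_right] using hm (σ j)

theorem potts_minimizer_symmetries_general (q : ℕ) [NeZero q] (hq : 3 ≤ q) (β h : ℝ)
    (x : Fin q → ℝ) (hx : IsPottsMinimizer q β h x) :
    -- (1) for `h > 0`: `x₁ > x₂ = x₃ = … = x_q`
    (0 < h → (∀ j k : Fin q, j ≠ 0 → k ≠ 0 → x j = x k) ∧
      (∀ k : Fin q, k ≠ 0 → x k < x 0)) ∧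
    -- (2) for `h < 0`: `x` is a permutation in the last `q-1` coordinates of a
    --     vector with `x₁ < x₂ = … = x_{q-1} ≤ x_q`
    (h < 0 → ∃ (y : Fin q → ℝ) (σ : Equiv.Perm (Fin q)),
      σ 0 = 0 ∧ x = y ∘ σ ∧
      (∀ j k : Fin q, IsMid q j → IsMid q k → y j = y k) ∧
      (∀ j : Fin q, IsMid q j → y 0 < y j) ∧
      (∀ j : Fin q, IsMid q j → y j ≤ y (lastIdx q))) := by
  refine ⟨fun hh => ?_, fun hh => ?_⟩
  · have hmax : ∀ k, x k ≤ x 0 :=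
      fun k => le_of_mul_le_mul_left (hx.mul_apply_le_mul_apply_zero k) hh
    exact ⟨fun j k hj hk => hx.apply_eq_apply_of_ne_of_forall_le hmax hj hj hk hk,
      fun k hk => (hmax k).lt_of_ne (hx.apply_ne_apply_zero hh.ne' hk)⟩
  · have hmin : ∀ k, k ≠ 0 → x 0 < x k := fun k hk =>
      ((mul_le_mul_left_of_neg hh).1 (hx.mul_apply_le_mul_apply_zero k)).lt_of_ne
        (hx.apply_ne_apply_zero hh.ne hk).symm
    obtain ⟨m, -, hm⟩ := Finset.exists_max_image Finset.univ x Finset.univ_nonempty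
    have hm0 : m ≠ 0 := by
      rintro rfl
      have h1 : (⟨1, by omega⟩ : Fin q) ≠ 0 := by simp [Fin.ext_iff]
      exact (hmin _ h1).not_ge (hm _ (Finset.mem_univ _))
    exact exists_perm_fixing_zero_of_forall_le x hm0 (fun k => hm k (Finset.mem_univ k)) hmin
      fun j k hj0 hjm hk0 hkm => hx.apply_eq_apply_of_ne_of_forall_le
        (fun k => hm k (Finset.mem_univ k)) hj0 hjm hk0 hkm

/-- Symmetries of the global minimizers of the Potts mean-field free energy (Lemma 5.4). -/
theorem potts_minimizer_symmetries (q : ℕ) [NeZero q] (hq : 3 ≤ q) (β h : ℝ) (hβ : 0 ≤ β)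
    (x : Fin q → ℝ) (hx : IsPottsMinimizer q β h x) :
    -- (1) for `h > 0`: `x₁ > x₂ = x₃ = … = x_q`
    (0 < h → (∀ j k : Fin q, j ≠ 0 → k ≠ 0 → x j = x k) ∧
      (∀ k : Fin q, k ≠ 0 → x k < x 0)) ∧
    -- (2) for `h < 0`: `x` is a permutation in the last `q-1` coordinates of a
    --     vector with `x₁ < x₂ = … = x_{q-1} ≤ x_q`
    (h < 0 → ∃ (y : Fin q → ℝ) (σ : Equiv.Perm (Fin q)),
      σ 0 = 0 ∧ x = y ∘ σ ∧
      (∀ j k : Fin q, IsMid q j → IsMid q k → y j = y k) ∧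
      (∀ j : Fin q, IsMid q j → y 0 < y j) ∧
      (∀ j : Fin q, IsMid q j → y j ≤ y (lastIdx q))) :=
  potts_minimizer_symmetries_general q hq β h x hx
end
end

section
/- Let q ≥ 4 be an integer, β ≥ 0 and h < 0. Let x and x' be global minimizers of Φ_{β,h}^{(q)} on Δ_q, each ordered so that x₁ < x₂ = ... = x_{q−1} ≤ x_q and x'₁ < x'₂ = ... = x'_{q−1} ≤ x'_q (every global minimizer admits such an ordering). Each satisfies the stationarity relations x₁ e^{−β x₁ − h} = x_k e^{−β x_k} for all k = 2,...,q; let Θ = x₁ e^{−β x₁ − h} and Θ' = x'₁ e^{−β x'₁ − h} denote the common values. If Θ = Θ', then x = x'. -/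
open Real Set

noncomputable section

/-- The ordered form `x₁ < x₂ = … = x_{q-1} ≤ x_q`. -/
def NegOrderedForm (q : ℕ) [NeZero q] (x : Fin q → ℝ) : Prop :=
  (∀ j k : Fin q, IsMid q j → IsMid q k → x j = x k) ∧
  (∀ j : Fin q, IsMid q j → x 0 < x j) ∧
  (∀ j : Fin q, IsMid q j → x j ≤ x (lastIdx q))

/-!
The free energy is a sum of one-site terms, so a minimizer cannot lower it by moving mass
between two coordinates. Since `u log u` has slope `-∞` at `0`, this forces all coordinates to
be positive; the first-order condition for such exchanges is the stationarity relation, and the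
second-order condition for an exchange between two equal coordinates `x₂ = x₃` gives
`β x₂ ≤ 1`, because the one-site free energy is strictly concave beyond `1/β`. Hence `x₁` and
`x₂` lie where `u ↦ u e^{-βu}` is strictly increasing, so `Θ` determines `x₁` and, through
stationarity, `x₂ = … = x_{q-1}`; the constraint `∑ xₖ = 1` then determines `x_q`.
-/

open Filter Topology

theorem exists_lt_of_tendsto_deriv_atBot {f f' : ℝ → ℝ} {a b : ℝ} (hab : a < b)
    (hf : ContinuousOn f (Icc a b)) (hf' : ∀ t ∈ Ioo a b, HasDerivAt f (f' t) t)
    (hlim : Tendsto f' (𝓝[>] a) atBot) : ∃ t ∈ Ioc a b, f t < f a := by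
  obtain ⟨u, hau, hneg⟩ :=
    mem_nhdsGT_iff_exists_Ioo_subset.1 (hlim.eventually (eventually_lt_atBot 0))
  set c := min u b
  have hac : a < c := lt_min hau hab
  have hanti : StrictAntiOn f (Icc a c) := by
    refine strictAntiOn_of_deriv_neg (convex_Icc a c) (hf.mono (Icc_subset_Icc_right
      (min_le_right u b))) fun t ht => ?_
    rw [interior_Icc] at ht
    rw [(hf' t ⟨ht.1, ht.2.trans_le (min_le_right u b)⟩).deriv]
    exact hneg ⟨ht.1, ht.2.trans_le (min_le_left u b)⟩
  exact ⟨c, ⟨hac, min_le_right u b⟩,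
    hanti ⟨le_rfl, hac.le⟩ ⟨hac.le, le_rfl⟩ hac⟩

theorem eq_of_sum_eq_of_forall_ne {ι M : Type*} [Fintype ι] [AddCommGroup M] {x y : ι → M}
    (k : ι) (hsum : ∑ i, x i = ∑ i, y i) (hne : ∀ i ≠ k, x i = y i) : x = y := by
  funext i
  obtain rfl | hik := eq_or_ne i k
  · have := Fintype.sum_eq_single i (f := x - y) fun j hj => sub_eq_zero.2 (hne j hj)
    simp only [Pi.sub_apply, Finset.sum_sub_distrib, hsum, sub_self] at this
    exact sub_eq_zero.1 this.symm
  · exact hne i hik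

section Separable

variable {ι : Type*} [Fintype ι] [DecidableEq ι] {G : ι → ℝ → ℝ} {x : ι → ℝ} {j k : ι}

theorem IsMinOn.exchange_le (hmin : IsMinOn (fun y => ∑ i, G i (y i)) (stdSimplex ℝ ι) x)
    (hx : x ∈ stdSimplex ℝ ι) (hjk : j ≠ k) {t : ℝ} (hj : 0 ≤ x j + t) (hk : 0 ≤ x k - t) :
    G j (x j) + G k (x k) ≤ G j (x j + t) + G k (x k - t) := by
  set y := x + Pi.single j t - Pi.single k t
  have hyj : y j = x j + t := by simp [y, hjk]
  have hyk : y k = x k - t := by simp [y, hjk.symm]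
  have hy : ∀ i, i ≠ j ∧ i ≠ k → y i = x i := fun i hi => by simp [y, hi.1, hi.2]
  have hmem : y ∈ stdSimplex ℝ ι := by
    refine ⟨fun i => ?_, by simp [y, Finset.sum_add_distrib, Finset.sum_sub_distrib, hx.2]⟩
    by_cases hij : i = j
    · rwa [hij, hyj]
    by_cases hik : i = k
    · rwa [hik, hyk]
    · rw [hy i ⟨hij, hik⟩]; exact hx.1 i
  have hle := sub_nonneg.2 (isMinOn_iff.1 hmin y hmem)
  rw [← Finset.sum_sub_distrib, Fintype.sum_eq_add j k hjk fun i hi => by simp [hy i hi],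
    hyj, hyk] at hle
  linarith

theorem IsMinOn.hasDerivAt_eq_of_pos
    (hmin : IsMinOn (fun y => ∑ i, G i (y i)) (stdSimplex ℝ ι) x)
    (hx : x ∈ stdSimplex ℝ ι) (hjk : j ≠ k) (hj : 0 < x j) (hk : 0 < x k) {a b : ℝ}
    (ha : HasDerivAt (G j) a (x j)) (hb : HasDerivAt (G k) b (x k)) : a = b := by
  have hloc : IsLocalMin (fun t => G j (x j + t) + G k (x k - t)) 0 := by
    filter_upwards [Ioo_mem_nhds (neg_lt_zero.2 hj) hk] with t ht
    simpa using hmin.exchange_le hx hjk (by linarith [ht.1]) (by linarith [ht.2])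
  have hd : HasDerivAt (fun t => G j (x j + t) + G k (x k - t)) (a + -b) 0 :=
    (HasDerivAt.comp_const_add _ _ (by simpa using ha)).add
      (HasDerivAt.comp_const_sub _ _ (by simpa using hb))
  linarith [hloc.hasDerivAt_eq_zero hd]

end Separable

def siteFreeEnergy (β u : ℝ) : ℝ := -(β / 2) * u ^ 2 + u * log u

theorem continuous_siteFreeEnergy (β : ℝ) : Continuous (siteFreeEnergy β) := by
  unfold siteFreeEnergy; fun_prop

theorem hasDerivAt_siteFreeEnergy {β u : ℝ} (hu : u ≠ 0) :
    HasDerivAt (siteFreeEnergy β) (log u + 1 - β * u) u := by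
  have := ((hasDerivAt_pow 2 u).const_mul (-(β / 2))).add (hasDerivAt_mul_log hu)
  exact this.congr_deriv (by push_cast; ring)

theorem strictConcaveOn_siteFreeEnergy {β : ℝ} (hβ : 0 < β) :
    StrictConcaveOn ℝ (Ici β⁻¹) (siteFreeEnergy β) := by
  refine StrictAntiOn.strictConcaveOn_of_deriv (convex_Ici _)
    (continuous_siteFreeEnergy β).continuousOn ?_
  rw [interior_Ici]
  intro u hu v hv huv
  have hu0 : 0 < u := (inv_pos.2 hβ).trans hu
  have hv0 : 0 < v := hu0.trans huv
  rw [(hasDerivAt_siteFreeEnergy hu0.ne').deriv, (hasDerivAt_siteFreeEnergy hv0.ne').deriv]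
  have hlog := log_lt_sub_one_of_pos (div_pos hv0 hu0) ((one_lt_div hu0).2 huv).ne'
  rw [log_div hv0.ne' hu0.ne'] at hlog
  have hβu : 1 < β * u := by rwa [mul_comm, ← inv_lt_iff_one_lt_mul₀ hβ]
  have : v / u - 1 ≤ β * (v - u) := by
    rw [div_sub_one hu0.ne', div_le_iff₀ hu0]; nlinarith
  linarith

theorem strictMonoOn_mul_exp_neg_mul (β : ℝ) :
    StrictMonoOn (fun u => u * exp (-β * u)) {u | 0 < u ∧ β * u ≤ 1} := by
  rintro u ⟨hu, -⟩ v ⟨hv, hvβ⟩ huv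
  simp only
  rw [← log_lt_log_iff (by positivity) (by positivity), log_mul hu.ne' (exp_pos _).ne',
    log_mul hv.ne' (exp_pos _).ne', log_exp, log_exp]
  have hlog := log_lt_sub_one_of_pos (div_pos hu hv) ((div_lt_one hv).2 huv).ne
  rw [log_div hu.ne' hv.ne'] at hlog
  have : u / v - 1 ≤ -(β * (v - u)) := by
    rw [div_sub_one hv.ne', div_le_iff₀ hv]; nlinarith
  linarith

def pottsSite (q : ℕ) [NeZero q] (β h : ℝ) (k : Fin q) (u : ℝ) : ℝ :=
  siteFreeEnergy β u - (if k = 0 then h else 0) * u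

section Potts

variable {q : ℕ} [NeZero q] {β h : ℝ}

theorem pottsPhi_eq_sum_pottsSite (x : Fin q → ℝ) :
    pottsPhi q β h x = ∑ k, pottsSite q β h k (x k) := by
  simp [pottsPhi, pottsSite, siteFreeEnergy, Finset.sum_sub_distrib, ite_mul]

theorem pottsSite_of_ne_zero {k : Fin q} (hk : k ≠ 0) :
    pottsSite q β h k = siteFreeEnergy β := by
  funext u; simp [pottsSite, hk]

theorem continuous_pottsSite (k : Fin q) : Continuous (pottsSite q β h k) := by
  unfold pottsSite; have := continuous_siteFreeEnergy β; fun_prop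

theorem hasDerivAt_pottsSite (k : Fin q) {u : ℝ} (hu : u ≠ 0) :
    HasDerivAt (pottsSite q β h k) (log u + 1 - β * u - if k = 0 then h else 0) u := by
  have := (hasDerivAt_siteFreeEnergy (β := β) hu).sub
    ((hasDerivAt_id' u).const_mul (if k = 0 then h else 0))
  rwa [mul_one] at this

variable {x : Fin q → ℝ}

theorem IsPottsMinimizer.isMinOn (hmin : IsPottsMinimizer q β h x) :
    IsMinOn (fun y => ∑ k, pottsSite q β h k (y k)) (stdSimplex ℝ (Fin q)) x :=
  isMinOn_iff.2 fun y hy => by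
    simpa only [pottsPhi_eq_sum_pottsSite] using hmin.2 y hy

theorem IsPottsMinimizer.pos_s13 (hmin : IsPottsMinimizer q β h x) (i : Fin q) : 0 < x i := by
  obtain ⟨hx0, hsum⟩ := hmin.1
  refine (hx0 i).lt_of_ne' fun hi => ?_
  obtain ⟨k, hk⟩ : ∃ k, 0 < x k := by
    by_contra! H
    linarith [Finset.sum_nonpos fun k (_ : k ∈ Finset.univ) => H k]
  have hik : i ≠ k := by rintro rfl; linarith
  set c : Fin q → ℝ := fun j => if j = 0 then h else 0
  have hlim : Tendsto (fun t => (log t + 1 - β * t - c i) -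
      (log (x k - t) + 1 - β * (x k - t) - c k)) (𝓝[>] 0) atBot := by
    have hcont : ContinuousAt (fun t => 1 - β * t - c i -
        (log (x k - t) + 1 - β * (x k - t) - c k)) 0 := by
      have : ContinuousAt (fun t => log (x k - t)) 0 :=
        (continuousAt_const.sub continuousAt_id).log (by simpa using hk.ne')
      fun_prop
    exact (tendsto_log_nhdsGT_zero.atBot_add (hcont.tendsto.mono_left nhdsWithin_le_nhds)).congr
      fun t => by ring
  obtain ⟨t, ht, hlt⟩ := exists_lt_of_tendsto_deriv_atBot hk
    (f := fun t => pottsSite q β h i t + pottsSite q β h k (x k - t))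
    (by have := continuous_pottsSite (β := β) (h := h) i
        have := continuous_pottsSite (β := β) (h := h) k
        fun_prop)
    (fun t ht => (hasDerivAt_pottsSite i ht.1.ne').add
      (HasDerivAt.comp_const_sub _ _ (hasDerivAt_pottsSite k (by linarith [ht.2]))))
    hlim
  have := hmin.isMinOn.exchange_le hmin.1 hik (t := t) (by linarith [ht.1]) (by linarith [ht.2])
  simp only [hi, zero_add, sub_zero] at this hlt
  linarith

theorem IsPottsMinimizer.stationarity (hmin : IsPottsMinimizer q β h x) {k : Fin q}
    (hk : k ≠ 0) : x 0 * exp (-β * x 0 - h) = x k * exp (-β * x k) := by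
  have h0 := hmin.pos_s13 0
  have hxk := hmin.pos_s13 k
  have := hmin.isMinOn.hasDerivAt_eq_of_pos hmin.1 hk.symm h0 hxk
    (hasDerivAt_pottsSite 0 h0.ne') (hasDerivAt_pottsSite k hxk.ne')
  simp only [if_neg hk, ↓reduceIte] at this
  calc x 0 * exp (-β * x 0 - h) = exp (log (x 0) + (-β * x 0 - h)) := by rw [exp_add, exp_log h0]
    _ = exp (log (x k) + -β * x k) := by congr 1; linarith
    _ = x k * exp (-β * x k) := by rw [exp_add, exp_log hxk]

theorem IsPottsMinimizer.mul_le_one_of_apply_eq (hmin : IsPottsMinimizer q β h x)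
    {j k : Fin q} (hjk : j ≠ k) (hj : j ≠ 0) (hk : k ≠ 0) (heq : x j = x k) :
    β * x j ≤ 1 := by
  by_contra! hb
  have hb0 := hmin.pos_s13 j
  have hβ : 0 < β := pos_of_mul_pos_left (one_pos.trans hb) hb0.le
  have hβb : β⁻¹ < x j := by rwa [inv_lt_iff_one_lt_mul₀ hβ, mul_comm]
  obtain ⟨t, ht0, htb⟩ : ∃ t, 0 < t ∧ β⁻¹ < x j - t :=
    ⟨(x j - β⁻¹) / 2, by linarith, by linarith⟩
  have hexch := hmin.isMinOn.exchange_le hmin.1 hjk (t := t) (by linarith)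
    (by linarith [inv_pos.2 hβ])
  rw [pottsSite_of_ne_zero hj, pottsSite_of_ne_zero hk, ← heq] at hexch
  have hconc := (strictConcaveOn_siteFreeEnergy hβ).2 (x := x j + t) (y := x j - t)
    (by simp only [mem_Ici]; linarith) (by simp only [mem_Ici]; linarith) (by linarith)
    (by norm_num : (0 : ℝ) < 1 / 2) (by norm_num : (0 : ℝ) < 1 / 2) (by norm_num)
  simp only [smul_eq_mul] at hconc
  rw [show 1 / 2 * (x j + t) + 1 / 2 * (x j - t) = x j by ring] at hconc
  linarith

end Potts

section OrderedForm

variable {q : ℕ} [NeZero q]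

theorem exists_isMid_ne (hq : 4 ≤ q) : ∃ j k : Fin q, IsMid q j ∧ IsMid q k ∧ j ≠ k :=
  ⟨⟨1, by omega⟩, ⟨2, by omega⟩, by simp [IsMid, lastIdx, Fin.ext_iff]; omega,
    by simp [IsMid, lastIdx, Fin.ext_iff]; omega, by simp [Fin.ext_iff]⟩

theorem NegOrderedForm.eq_of_apply_eq {x x' : Fin q → ℝ} (hf : NegOrderedForm q x)
    (hf' : NegOrderedForm q x') (hx : x ∈ pottsSimplex q) (hx' : x' ∈ pottsSimplex q)
    {j : Fin q} (hj : IsMid q j) (h0 : x 0 = x' 0) (hjj : x j = x' j) : x = x' :=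
  eq_of_sum_eq_of_forall_ne (lastIdx q) (hx.2.trans hx'.2.symm) fun i hi => by
    obtain rfl | hi0 := eq_or_ne i 0
    · exact h0
    · rw [hf.1 i j ⟨hi0, hi⟩ hj, hf'.1 i j ⟨hi0, hi⟩ hj, hjj]

theorem IsPottsMinimizer.mul_le_one_of_negOrderedForm {β h : ℝ} {x : Fin q → ℝ}
    (hmin : IsPottsMinimizer q β h x) (hf : NegOrderedForm q x) (hq : 4 ≤ q) {i : Fin q}
    (hi : IsMid q i) : β * x 0 ≤ 1 ∧ β * x i ≤ 1 := by
  obtain ⟨j, k, hj, hk, hjk⟩ := exists_isMid_ne hq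
  have hmid : β * x i ≤ 1 := by
    rw [hf.1 i j hi hj]
    exact hmin.mul_le_one_of_apply_eq hjk hj.1 hk.1 (hf.1 j k hj hk)
  refine ⟨?_, hmid⟩
  rcases le_total β 0 with hβ | hβ
  · nlinarith [hmin.pos_s13 0]
  · exact (mul_le_mul_of_nonneg_left (hf.2.1 i hi).le hβ).trans hmid

end OrderedForm

theorem potts_Theta_determines_minimizer_general (q : ℕ) [NeZero q] (hq : 4 ≤ q)
    (β h : ℝ) (x x' : Fin q → ℝ)
    (hx : IsPottsMinimizer q β h x) (hxf : NegOrderedForm q x)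
    (hx' : IsPottsMinimizer q β h x') (hx'f : NegOrderedForm q x') :
    -- the stationarity relations hold for `x` and `x'` …
    (∀ k : Fin q, k ≠ 0 →
      x 0 * Real.exp (-β * x 0 - h) = x k * Real.exp (-β * x k)) ∧
    (∀ k : Fin q, k ≠ 0 →
      x' 0 * Real.exp (-β * x' 0 - h) = x' k * Real.exp (-β * x' k)) ∧
    -- … and if the common values `Θ`, `Θ'` agree, the minimizers coincide
    (x 0 * Real.exp (-β * x 0 - h) = x' 0 * Real.exp (-β * x' 0 - h) → x = x') := by
  refine ⟨fun k hk => hx.stationarity hk, fun k hk => hx'.stationarity hk, fun hΘ => ?_⟩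
  obtain ⟨j, -, hj, -, -⟩ := exists_isMid_ne hq
  obtain ⟨h0β, hjβ⟩ := hx.mul_le_one_of_negOrderedForm hxf hq hj
  obtain ⟨h0β', hjβ'⟩ := hx'.mul_le_one_of_negOrderedForm hx'f hq hj
  have hinj := (strictMonoOn_mul_exp_neg_mul β).injOn
  have h0 : x 0 = x' 0 := hinj ⟨hx.pos_s13 0, h0β⟩ ⟨hx'.pos_s13 0, h0β'⟩ <| by
    simpa only [exp_sub, ← mul_div_assoc, div_left_inj' (exp_pos h).ne'] using hΘ
  have hjj : x j = x' j := hinj ⟨hx.pos_s13 j, hjβ⟩ ⟨hx'.pos_s13 j, hjβ'⟩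
    ((hx.stationarity hj.1).symm.trans (hΘ.trans (hx'.stationarity hj.1)))
  exact hxf.eq_of_apply_eq hx'f hx.1 hx'.1 hj h0 hjj

/-- Equality of the stationarity values `Θ` forces equality of the ordered
global minimizers (Lemma 5.10). -/
theorem potts_Theta_determines_minimizer (q : ℕ) [NeZero q] (hq : 4 ≤ q)
    (β h : ℝ) (hβ : 0 ≤ β) (hh : h < 0) (x x' : Fin q → ℝ)
    (hx : IsPottsMinimizer q β h x) (hxf : NegOrderedForm q x)
    (hx' : IsPottsMinimizer q β h x') (hx'f : NegOrderedForm q x') :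
    -- the stationarity relations hold for `x` and `x'` …
    (∀ k : Fin q, k ≠ 0 →
      x 0 * Real.exp (-β * x 0 - h) = x k * Real.exp (-β * x k)) ∧
    (∀ k : Fin q, k ≠ 0 →
      x' 0 * Real.exp (-β * x' 0 - h) = x' k * Real.exp (-β * x' k)) ∧
    -- … and if the common values `Θ`, `Θ'` agree, the minimizers coincide
    (x 0 * Real.exp (-β * x 0 - h) = x' 0 * Real.exp (-β * x' 0 - h) → x = x') :=
  potts_Theta_determines_minimizer_general q hq β h x x' hx hxf hx' hx'f
end
end
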